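/- In the symmetric group S_{n+2} with adjacent transpositions s_1,…,s_{n+1}, for all integers i, a with 1 ≤ i ≤ a ≤ n, one has s_{a+1} · (s_a s_{a−1} ⋯ s_i) · (s_{a+1} s_a ⋯ s_{i+1}) = (s_a s_{a−1} ⋯ s_i) · (s_{a+1} s_a ⋯ s_{i+1}) · s_i. -/
import Mathlib


/-- The adjacent transposition `s j = (j, j+1)`, realized inside `Equiv.Perm ℕ`
(the subgroup permuting `{1,…,n+1}` is the symmetric group `S_{n+1}`). -/
def adjTrans (j : ℕ) : Equiv.Perm ℕ := Equiv.swap j (j + 1)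

/-- The product `s_a s_{a-1} ⋯ s_b` with decreasing indices from `a` down to `b`. -/
def decProd (b a : ℕ) : Equiv.Perm ℕ :=
  ((List.range' b (a + 1 - b)).reverse.map adjTrans).prod

lemma decProd_self (b : ℕ) : decProd b b = adjTrans b := by
  have h : b + 1 - b = 1 := by omega
  simp [decProd, h, List.range'_one]

lemma decProd_succ (b a : ℕ) (h : b ≤ a + 1) :
    decProd b (a + 1) = adjTrans (a + 1) * decProd b a := by
  unfold decProd
  have h2 : a + 1 + 1 - b = (a + 1 - b) + 1 := by omega
  have h3 : b + (a + 1 - b) = a + 1 := by omega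
  rw [h2, List.range'_1_concat, h3, List.reverse_append]
  simp

lemma adjTrans_apply (j x : ℕ) :
    adjTrans j x = if x = j then j + 1 else if x = j + 1 then j else x := by
  simp [adjTrans, Equiv.swap_apply_def]

lemma decProd_apply (b a : ℕ) (h : b ≤ a) (x : ℕ) :
    decProd b a x = if x = b then a + 1 else if b < x ∧ x ≤ a + 1 then x - 1 else x := by
  induction a, h using Nat.le_induction with
  | base =>
      rw [decProd_self, adjTrans_apply]
      split_ifs <;> omega
  | succ a hba ih =>
      rw [decProd_succ b a (by omega), Equiv.Perm.mul_apply, ih, adjTrans_apply]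
      split_ifs <;> omega

set_option maxHeartbeats 2000000 in
theorem stmt2 (n i a : ℕ) (h1 : 1 ≤ i) (h2 : i ≤ a) (h3 : a ≤ n) :
    adjTrans (a + 1) * decProd i a * decProd (i + 1) (a + 1)
      = decProd i a * decProd (i + 1) (a + 1) * adjTrans i := by
  ext x
  simp only [Equiv.Perm.mul_apply, decProd_apply i a h2, adjTrans_apply,
    decProd_apply (i + 1) (a + 1) (by omega)]
  split_ifs <;> omega
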